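/- arXiv:1811.02262 — 4 statements merged into one kernel-verified Lean document; each statement's English description precedes it below -/
import Mathlib

section
/- Let H be a complex separable infinite-dimensional Hilbert space and T a bounded linear operator on H. If T is Cesàro-hypercyclic, then T satisfies a-Browder's theorem, i.e. σ_ea(T) = σ_ab(T). -/
open Filter Topology

noncomputable section

variable {E : Type*} [NormedAddCommGroup E] [NormedSpace ℂ E]

/-- `T` is Cesàro-hypercyclic: some orbit `{n⁻¹ Tⁿ x : n ≥ 1}` is dense. -/
def CesaroHypercyclic (T : E →L[ℂ] E) : Prop :=
  ∃ x : E, Dense {y : E | ∃ n : ℕ, 1 ≤ n ∧ y = ((n : ℂ))⁻¹ • (T ^ n) x}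

/-- `S` is upper semi-Fredholm: closed range and finite-dimensional kernel. -/
def IsUpperSemiFredholm (S : E →L[ℂ] E) : Prop :=
  IsClosed (LinearMap.range (S : E →ₗ[ℂ] E) : Set E) ∧ FiniteDimensional ℂ (LinearMap.ker (S : E →ₗ[ℂ] E))

/-- `S` is lower semi-Fredholm: closed range of finite codimension. -/
def IsLowerSemiFredholm (S : E →L[ℂ] E) : Prop :=
  IsClosed (LinearMap.range (S : E →ₗ[ℂ] E) : Set E) ∧ FiniteDimensional ℂ (E ⧸ LinearMap.range (S : E →ₗ[ℂ] E))

/-- `S` is semi-Fredholm. -/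
def IsSemiFredholm (S : E →L[ℂ] E) : Prop :=
  IsUpperSemiFredholm S ∨ IsLowerSemiFredholm S

/-- `S` is Fredholm. -/
def IsFredholm (S : E →L[ℂ] E) : Prop :=
  IsUpperSemiFredholm S ∧ IsLowerSemiFredholm S

/-- The index of a semi-Fredholm operator `S` is `≤ 0`:
`dim ker S ≤ codim ran S` (as cardinals, so that an infinite codimension is allowed). -/
def IndexLE0 (S : E →L[ℂ] E) : Prop :=
  Module.rank ℂ (LinearMap.ker (S : E →ₗ[ℂ] E)) ≤ Module.rank ℂ (E ⧸ LinearMap.range (S : E →ₗ[ℂ] E))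

/-- The index of a semi-Fredholm operator `S` is `≥ 0`:
`codim ran S ≤ dim ker S` (as cardinals, so that an infinite kernel is allowed). -/
def IndexGE0 (S : E →L[ℂ] E) : Prop :=
  Module.rank ℂ (E ⧸ LinearMap.range (S : E →ₗ[ℂ] E)) ≤ Module.rank ℂ (LinearMap.ker (S : E →ₗ[ℂ] E))

/-- `S` is Weyl: Fredholm of index zero. -/
def IsWeyl (S : E →L[ℂ] E) : Prop :=
  IsFredholm S ∧ Module.rank ℂ (LinearMap.ker (S : E →ₗ[ℂ] E)) = Module.rank ℂ (E ⧸ LinearMap.range (S : E →ₗ[ℂ] E))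

/-- `S` has finite ascent: the kernels of its powers stabilize. -/
def HasFiniteAscent (S : E →L[ℂ] E) : Prop :=
  ∃ n : ℕ, LinearMap.ker ((S ^ n : E →L[ℂ] E) : E →ₗ[ℂ] E) = LinearMap.ker ((S ^ (n + 1) : E →L[ℂ] E) : E →ₗ[ℂ] E)

/-- `S` has finite descent: the ranges of its powers stabilize. -/
def HasFiniteDescent (S : E →L[ℂ] E) : Prop :=
  ∃ n : ℕ, LinearMap.range ((S ^ n : E →L[ℂ] E) : E →ₗ[ℂ] E) = LinearMap.range ((S ^ (n + 1) : E →L[ℂ] E) : E →ₗ[ℂ] E)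

/-- `S` is Browder: Fredholm with finite ascent and finite descent. -/
def IsBrowder (S : E →L[ℂ] E) : Prop :=
  IsFredholm S ∧ HasFiniteAscent S ∧ HasFiniteDescent S

/-- `S` is bounded below. -/
def IsBoundedBelow (S : E →L[ℂ] E) : Prop :=
  ∃ c > (0 : ℝ), ∀ x : E, c * ‖x‖ ≤ ‖S x‖

/-- The Weyl spectrum `σ_w(T)`. -/
def weylSpectrum (T : E →L[ℂ] E) : Set ℂ :=
  {lam : ℂ | ¬ IsWeyl (T - lam • 1)}

/-- The Browder spectrum `σ_b(T)`. -/
def browderSpectrum (T : E →L[ℂ] E) : Set ℂ :=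
  {lam : ℂ | ¬ IsBrowder (T - lam • 1)}

/-- The approximate point spectrum `σ_a(T)`. -/
def approxSpectrum (T : E →L[ℂ] E) : Set ℂ :=
  {lam : ℂ | ¬ IsBoundedBelow (T - lam • 1)}

/-- The essential approximate point spectrum `σ_ea(T)`. -/
def essApproxSpectrum (T : E →L[ℂ] E) : Set ℂ :=
  {lam : ℂ | ¬ (IsUpperSemiFredholm (T - lam • 1) ∧ IndexLE0 (T - lam • 1))}

/-- The Browder essential approximate point spectrum `σ_ab(T)`. -/
def browderEssApproxSpectrum (T : E →L[ℂ] E) : Set ℂ :=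
  {lam : ℂ | ¬ (IsUpperSemiFredholm (T - lam • 1) ∧ IndexLE0 (T - lam • 1) ∧
    HasFiniteAscent (T - lam • 1))}

/-- `lam` is an isolated point of the set `s`. -/
def IsIsolatedPointOf (s : Set ℂ) (lam : ℂ) : Prop :=
  lam ∈ s ∧ ∃ ε > (0 : ℝ), ∀ mu ∈ s, ‖mu - lam‖ < ε → mu = lam

/-- `π₀₀(T)`: isolated points of the spectrum which are eigenvalues of finite multiplicity. -/
def pi00 (T : E →L[ℂ] E) : Set ℂ :=
  {lam : ℂ | IsIsolatedPointOf (spectrum ℂ T) lam ∧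
    LinearMap.ker ((T - lam • 1 : E →L[ℂ] E) : E →ₗ[ℂ] E) ≠ ⊥ ∧
      FiniteDimensional ℂ (LinearMap.ker ((T - lam • 1 : E →L[ℂ] E) : E →ₗ[ℂ] E))}

/-- `π₀₀ᵃ(T)`: isolated points of the approximate point spectrum which are eigenvalues of
finite multiplicity. -/
def pi00a (T : E →L[ℂ] E) : Set ℂ :=
  {lam : ℂ | IsIsolatedPointOf (approxSpectrum T) lam ∧
    LinearMap.ker ((T - lam • 1 : E →L[ℂ] E) : E →ₗ[ℂ] E) ≠ ⊥ ∧
      FiniteDimensional ℂ (LinearMap.ker ((T - lam • 1 : E →L[ℂ] E) : E →ₗ[ℂ] E))}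

/-- Weyl's theorem holds for `T`: `σ(T) \ σ_w(T) = π₀₀(T)`. -/
def WeylsTheorem (T : E →L[ℂ] E) : Prop :=
  spectrum ℂ T \ weylSpectrum T = pi00 T

/-- a-Weyl's theorem holds for `T`: `σ_a(T) \ σ_ea(T) = π₀₀ᵃ(T)`. -/
def AWeylsTheorem (T : E →L[ℂ] E) : Prop :=
  approxSpectrum T \ essApproxSpectrum T = pi00a T

/-- a-Browder's theorem holds for `T`: `σ_ea(T) = σ_ab(T)`. -/
def ABrowdersTheorem (T : E →L[ℂ] E) : Prop :=
  essApproxSpectrum T = browderEssApproxSpectrum T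

/-- The unit circle `∂D = {z : ‖z‖ = 1}`. -/
def unitCircleSet : Set ℂ := {z : ℂ | ‖z‖ = 1}

/-- Restriction of a continuous linear map to an invariant submodule. -/
def clmRestrict (S : E →L[ℂ] E) (M : Submodule ℂ E) (h : ∀ x ∈ M, S x ∈ M) : M →L[ℂ] M :=
  ⟨(S : E →ₗ[ℂ] E).restrict h,
    Continuous.subtype_mk (S.continuous.comp continuous_subtype_val) _⟩

/-- `S` is generalized upper semi-Fredholm: `E = M ⊕ N` for closed `S`-invariant
subspaces `M`, `N` with `S|_M` upper semi-Fredholm of index `≤ 0` and `S|_N`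
quasinilpotent. -/
def IsGeneralizedUpperSemiFredholm (S : E →L[ℂ] E) : Prop :=
  ∃ (M N : Submodule ℂ E), IsClosed (M : Set E) ∧ IsClosed (N : Set E) ∧ IsCompl M N ∧
    ∃ (hM : ∀ x ∈ M, S x ∈ M) (hN : ∀ x ∈ N, S x ∈ N),
      IsUpperSemiFredholm (clmRestrict S M hM) ∧ IndexLE0 (clmRestrict S M hM) ∧
      spectrum ℂ (clmRestrict S N hN) = {0}

/-- `σ₁(T)`: the complement of the set of `lam` around which `T - mu` is generalized
upper semi-Fredholm for all `mu ≠ lam` close enough to `lam`. -/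
def sigma1 (T : E →L[ℂ] E) : Set ℂ :=
  {lam : ℂ | ¬ ∃ ε > (0 : ℝ), ∀ mu : ℂ, 0 < ‖mu - lam‖ → ‖mu - lam‖ < ε →
    IsGeneralizedUpperSemiFredholm (T - mu • 1)}

end

variable {H : Type*} [NormedAddCommGroup H] [InnerProductSpace ℂ H] [CompleteSpace H]
  [TopologicalSpace.SeparableSpace H]

/-!
If `T - λ` is upper semi-Fredholm, its range is closed. It is also dense: a nonzero functional
`φ` vanishing on it satisfies `φ (n⁻¹ Tⁿ x) = n⁻¹ λⁿ φ x`, so `φ` would map a dense Cesàro orbit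
onto the set `{n⁻¹ λⁿ c}`, which is never dense in `ℂ` (it is bounded if `‖λ‖ ≤ 1` and tends to
infinity otherwise). Hence `T - λ` is surjective, index `≤ 0` makes it injective, and an
injective operator has ascent `0`.
-/

theorem tendsto_pow_div_natCast_atTop {r : ℝ} (hr : 1 < r) :
    Tendsto (fun n : ℕ => r ^ n / n) atTop atTop := by
  have hlim := tendsto_pow_const_div_const_pow_of_one_lt 1 hr
  simp only [pow_one] at hlim
  have hpos : ∀ᶠ n : ℕ in atTop, (n : ℝ) / r ^ n ∈ Set.Ioi 0 :=
    (eventually_ge_atTop 1).mono fun n hn =>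
      div_pos (Nat.cast_pos.mpr hn) (pow_pos (zero_lt_one.trans hr) n)
  simpa [Pi.inv_def, inv_div] using
    (tendsto_nhdsWithin_iff.mpr ⟨hlim, hpos⟩).inv_tendsto_nhdsGT_zero

theorem not_dense_of_isBounded {E : Type*} [NormedAddCommGroup E] [NormedSpace ℝ E]
    [Nontrivial E] {s : Set E} (hs : Bornology.IsBounded s) : ¬ Dense s := fun hd =>
  NormedSpace.unbounded_univ ℝ E (hd.closure_eq ▸ hs.closure)

/-- Only finitely many terms lie in the unit ball, and a dense subset of a nontrivial normed
space stays dense after removing finitely many points. -/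
theorem not_dense_range_of_tendsto_norm_atTop {E : Type*} [NormedAddCommGroup E]
    [NormedSpace ℝ E] [Nontrivial E] {u : ℕ → E} (hu : Tendsto (fun n => ‖u n‖) atTop atTop) :
    ¬ Dense (Set.range u) := by
  intro hd
  have hfin : {n | ‖u n‖ < 1}.Finite := by
    simpa [← Nat.cofinite_eq_atTop] using hu.eventually_ge_atTop 1
  have hsub : Set.range u \ u '' {n | ‖u n‖ < 1} ⊆ {z | 1 ≤ ‖z‖} := by
    rintro _ ⟨⟨n, rfl⟩, hn⟩
    show 1 ≤ ‖u n‖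
    exact le_of_not_gt fun h => hn ⟨n, h, rfl⟩
  have hclosure := closure_minimal hsub (isClosed_le continuous_const continuous_norm)
  rw [(hd.sdiff_finite (hfin.image u)).closure_eq] at hclosure
  exact absurd (hclosure (Set.mem_univ 0)) (by simp)

theorem not_dense_range_inv_natCast_mul_pow_mul (lam c : ℂ) :
    ¬ Dense (Set.range fun n : ℕ => (n : ℂ)⁻¹ * (lam ^ n * c)) := by
  by_cases hbdd : ‖lam‖ ≤ 1 ∨ c = 0
  · refine not_dense_of_isBounded ((Metric.isBounded_closedBall (x := 0) (r := ‖c‖)).subset ?_)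
    rintro _ ⟨n, rfl⟩
    rcases hbdd with hlam | rfl
    · rw [Metric.mem_closedBall, dist_zero_right, norm_mul, norm_mul, norm_pow, norm_inv,
        Complex.norm_natCast]
      calc (n : ℝ)⁻¹ * (‖lam‖ ^ n * ‖c‖) ≤ 1 * (1 * ‖c‖) := by
            gcongr
            exacts [Nat.cast_inv_le_one n, pow_le_one₀ (norm_nonneg _) hlam]
        _ = ‖c‖ := by ring
    · simp
  · rw [not_or, not_le] at hbdd
    refine not_dense_range_of_tendsto_norm_atTop ?_
    have hnorm : (fun n : ℕ => ‖(n : ℂ)⁻¹ * (lam ^ n * c)‖) =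
        fun n : ℕ => ‖c‖ * (‖lam‖ ^ n / n) := by
      ext n
      simp only [norm_mul, norm_inv, norm_pow, Complex.norm_natCast]
      ring
    rw [hnorm]
    exact (tendsto_pow_div_natCast_atTop hbdd.1).const_mul_atTop (norm_pos_iff.mpr hbdd.2)

theorem Submodule.exists_dual_ne_zero_of_not_dense {𝕜 E : Type*} [RCLike 𝕜]
    [NormedAddCommGroup E] [NormedSpace 𝕜 E] {K : Submodule 𝕜 E} (hK : ¬ Dense (K : Set E)) :
    ∃ φ : StrongDual 𝕜 E, φ ≠ 0 ∧ ∀ v ∈ K, φ v = 0 := by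
  set L := K.topologicalClosure
  have : IsClosed (L : Set E) := K.isClosed_topologicalClosure
  obtain ⟨v, hv⟩ : ∃ v, v ∉ L := by
    by_contra! h
    exact hK (K.dense_iff_topologicalClosure_eq_top.mpr (L.eq_top_iff'.mpr h))
  obtain ⟨g, hg⟩ := SeparatingDual.exists_ne_zero (R := 𝕜)
    (mt (Submodule.Quotient.mk_eq_zero L).mp hv)
  refine ⟨g ∘L L.mkQL, fun h => hg (by simpa using congr($h v)), fun w hw => ?_⟩
  simp [(Submodule.Quotient.mk_eq_zero L).mpr (K.le_topologicalClosure hw)]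

section Operator

variable {E : Type*} [NormedAddCommGroup E] [NormedSpace ℂ E]

theorem CesaroHypercyclic.dense_range_sub_smul {T : E →L[ℂ] E} (hT : CesaroHypercyclic T)
    (lam : ℂ) : Dense (LinearMap.range ((T - lam • 1 : E →L[ℂ] E) : E →ₗ[ℂ] E) : Set E) := by
  by_contra hK
  obtain ⟨φ, hφ0, hφK⟩ := Submodule.exists_dual_ne_zero_of_not_dense hK
  have hφT (v : E) : φ (T v) = lam * φ v := by
    simpa [sub_eq_zero] using hφK _ (LinearMap.mem_range_self _ v)
  have hφTn (n : ℕ) (v : E) : φ ((T ^ n) v) = lam ^ n * φ v := by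
    induction n generalizing v with
    | zero => simp
    | succ k ih =>
      rw [pow_succ]
      exact (ih (T v)).trans (by rw [hφT, pow_succ, mul_assoc])
  obtain ⟨x, hx⟩ := hT
  have hφ : DenseRange φ :=
    (LinearMap.surjective (f := (φ : E →ₗ[ℂ] ℂ)) (by exact_mod_cast hφ0)).denseRange
  refine not_dense_range_inv_natCast_mul_pow_mul lam (φ x)
    ((hφ.dense_image φ.continuous hx).mono ?_)
  rintro _ ⟨_, ⟨n, -, rfl⟩, rfl⟩
  exact ⟨n, by simp only [map_smul, hφTn, smul_eq_mul]⟩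

theorem ker_eq_bot_of_range_eq_top_of_indexLE0 {S : E →L[ℂ] E} (hS : IndexLE0 S)
    (hrange : LinearMap.range (S : E →ₗ[ℂ] E) = ⊤) : LinearMap.ker (S : E →ₗ[ℂ] E) = ⊥ := by
  have : Subsingleton (E ⧸ LinearMap.range (S : E →ₗ[ℂ] E)) :=
    Submodule.Quotient.subsingleton_iff.mpr hrange
  exact Submodule.rank_eq_zero.mp (nonpos_iff_eq_zero.mp (hS.trans_eq (rank_subsingleton' ℂ _)))

theorem hasFiniteAscent_of_ker_eq_bot {S : E →L[ℂ] E} (hS : LinearMap.ker (S : E →ₗ[ℂ] E) = ⊥) :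
    HasFiniteAscent S :=
  ⟨0, by rw [pow_zero, pow_one, hS]; exact LinearMap.ker_id⟩

theorem CesaroHypercyclic.hasFiniteAscent_sub_smul {T : E →L[ℂ] E} (hT : CesaroHypercyclic T)
    {lam : ℂ} (hU : IsUpperSemiFredholm (T - lam • 1)) (hI : IndexLE0 (T - lam • 1)) :
    HasFiniteAscent (T - lam • 1) := by
  have hrange : LinearMap.range ((T - lam • 1 : E →L[ℂ] E) : E →ₗ[ℂ] E) = ⊤ :=
    SetLike.coe_injective ((hT.dense_range_sub_smul lam).closure_eq ▸ hU.1.closure_eq).symm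
  exact hasFiniteAscent_of_ker_eq_bot (ker_eq_bot_of_range_eq_top_of_indexLE0 hI hrange)

end Operator

theorem cesaroHypercyclic_aBrowder_general
    (T : H →L[ℂ] H) (hT : CesaroHypercyclic T) :
    essApproxSpectrum T = browderEssApproxSpectrum T := by
  ext lam
  exact not_congr ⟨fun ⟨hU, hI⟩ => ⟨hU, hI, hT.hasFiniteAscent_sub_smul hU hI⟩,
    fun ⟨hU, hI, _⟩ => ⟨hU, hI⟩⟩

theorem cesaroHypercyclic_aBrowder
    (hinf : ¬ FiniteDimensional ℂ H) (T : H →L[ℂ] H) (hT : CesaroHypercyclic T) :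
    essApproxSpectrum T = browderEssApproxSpectrum T :=
  cesaroHypercyclic_aBrowder_general T hT
end

section
/- Let H be a complex separable infinite-dimensional Hilbert space and T a bounded linear operator on H. If T is Cesàro-hypercyclic, then the Hilbert-space adjoint T* satisfies Weyl's theorem, i.e. σ(T*) \ σ_w(T*) = π₀₀(T*). -/
open Filter Topology

/-!
If `T† v = λ v` with `v ≠ 0`, the functional `⟪v, ·⟫` intertwines `T` with multiplication by
`conj λ`, so it maps the Cesàro orbit `{n⁻¹ Tⁿ x}` onto `{n⁻¹ (conj λ)ⁿ ⟪v, x⟫}`. Being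
surjective it preserves density, but that scalar set is bounded when `|λ| ≤ 1` and bounded away
from `0` when `|λ| > 1`. Hence `T†` has no eigenvalues: `π₀₀(T†)` is empty, and a Weyl operator
`T† - λ` with trivial kernel has trivial cokernel too, so it is invertible and `σ(T†) \ σ_w(T†)`
is empty as well.
-/

open ContinuousLinearMap

lemma Dense.not_isBounded {E : Type*} [NormedAddCommGroup E] [NormedSpace ℝ E] [Nontrivial E]
    {s : Set E} (hs : Dense s) : ¬ Bornology.IsBounded s := fun h ↦
  NormedSpace.unbounded_univ ℝ E (hs.closure_eq ▸ h.closure)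

lemma sub_one_le_pow_div_of_one_lt {r : ℝ} (hr : 1 < r) {n : ℕ} (hn : 1 ≤ n) :
    r - 1 ≤ r ^ n / n := by
  have hn' : (0 : ℝ) < n := by exact_mod_cast hn
  have bernoulli := one_add_mul_le_pow (a := r - 1) (by linarith) n
  rw [add_sub_cancel] at bernoulli
  rw [le_div_iff₀ hn']
  nlinarith

lemma not_dense_cesaro_geometric (μ c : ℂ) :
    ¬ Dense {z : ℂ | ∃ n : ℕ, 1 ≤ n ∧ z = (n : ℂ)⁻¹ * μ ^ n * c} := by
  intro hd
  have norm_eq : ∀ n : ℕ, ‖(n : ℂ)⁻¹ * μ ^ n * c‖ = ‖μ‖ ^ n / n * ‖c‖ := fun n ↦ by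
    simp [div_eq_inv_mul]
  by_cases hsmall : ‖μ‖ ≤ 1 ∨ c = 0
  · refine hd.not_isBounded (isBounded_iff_forall_norm_le.2 ⟨‖c‖, ?_⟩)
    rintro _ ⟨n, hn, rfl⟩
    rw [norm_eq]
    rcases hsmall with hμ | rfl
    · have : ‖μ‖ ^ n / n ≤ 1 :=
        div_le_one_of_le₀ ((pow_le_one₀ (norm_nonneg μ) hμ).trans (by exact_mod_cast hn))
          n.cast_nonneg
      exact mul_le_of_le_one_left (norm_nonneg c) this
    · simp
  · rw [not_or, not_le] at hsmall
    obtain ⟨hμ, hc⟩ := hsmall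
    have hr : 0 < (‖μ‖ - 1) * ‖c‖ := mul_pos (by linarith) (norm_pos_iff.2 hc)
    obtain ⟨_, ⟨n, hn, rfl⟩, hz⟩ :=
      hd.exists_mem_open Metric.isOpen_ball ⟨0, Metric.mem_ball_self hr⟩
    rw [mem_ball_zero_iff, norm_eq] at hz
    have := mul_le_mul_of_nonneg_right (sub_one_le_pow_div_of_one_lt hμ hn) (norm_nonneg c)
    linarith

lemma CesaroHypercyclic.eq_zero_of_comp_eq_smul {E : Type*} [NormedAddCommGroup E]
    [NormedSpace ℂ E] {T : E →L[ℂ] E} (hT : CesaroHypercyclic T) {φ : E →L[ℂ] ℂ} {μ : ℂ}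
    (hφ : φ.comp T = μ • φ) : φ = 0 := by
  by_contra hφ0
  obtain ⟨x, hx⟩ := hT
  have φ_pow : ∀ n : ℕ, φ ((T ^ n) x) = μ ^ n * φ x := by
    intro n
    induction n with
    | zero => simp
    | succ n ih =>
      calc φ ((T ^ (n + 1)) x) = (φ.comp T) ((T ^ n) x) := by rw [pow_succ']; rfl
        _ = μ ^ (n + 1) * φ x := by rw [hφ, smul_apply, ih, smul_eq_mul, pow_succ', mul_assoc]
  have hsurj : Function.Surjective φ := by
    obtain ⟨y, hy⟩ := DFunLike.ne_iff.1 hφ0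
    exact fun z ↦ ⟨(z / φ y) • y, by simp [div_mul_cancel₀ z hy]⟩
  refine not_dense_cesaro_geometric μ (φ x) ((hsurj.denseRange.dense_image φ.continuous hx).mono ?_)
  rintro _ ⟨_, ⟨n, hn, rfl⟩, rfl⟩
  exact ⟨n, hn, by rw [map_smul, φ_pow, smul_eq_mul, mul_assoc]⟩

lemma innerSL_comp_eq_smul_of_adjoint_apply_eq_smul {H : Type*} [NormedAddCommGroup H]
    [InnerProductSpace ℂ H] [CompleteSpace H] {T : H →L[ℂ] H} {v : H} {lam : ℂ}
    (hv : adjoint T v = lam • v) : (innerSL ℂ v).comp T = starRingEnd ℂ lam • innerSL ℂ v := by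
  ext y
  simp [← adjoint_inner_left, hv, inner_smul_left]

lemma CesaroHypercyclic.ker_adjoint_sub_smul_eq_bot {H : Type*} [NormedAddCommGroup H]
    [InnerProductSpace ℂ H] [CompleteSpace H] {T : H →L[ℂ] H} (hT : CesaroHypercyclic T)
    (lam : ℂ) : LinearMap.ker ((adjoint T - lam • 1 : H →L[ℂ] H) : H →ₗ[ℂ] H) = ⊥ := by
  refine (Submodule.eq_bot_iff _).2 fun v hv ↦ ?_
  have hev : adjoint T v = lam • v := sub_eq_zero.1 hv
  have := hT.eq_zero_of_comp_eq_smul (innerSL_comp_eq_smul_of_adjoint_apply_eq_smul hev)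
  rw [← norm_eq_zero, ← innerSL_apply_norm ℂ, this, norm_zero]

lemma IsWeyl.isUnit_of_ker_eq_bot {E : Type*} [NormedAddCommGroup E] [NormedSpace ℂ E]
    [CompleteSpace E] {S : E →L[ℂ] E} (hS : IsWeyl S)
    (hker : LinearMap.ker (S : E →ₗ[ℂ] E) = ⊥) : IsUnit S := by
  have hcoker : Module.rank ℂ (E ⧸ LinearMap.range (S : E →ₗ[ℂ] E)) = 0 := by
    rw [← hS.2, hker, rank_bot]
  have hrange : LinearMap.range (S : E →ₗ[ℂ] E) = ⊤ :=
    Submodule.Quotient.subsingleton_iff.1 (rank_zero_iff.1 hcoker)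
  exact ContinuousLinearMap.isUnit_iff_bijective.2
    ⟨LinearMap.ker_eq_bot.1 hker, LinearMap.range_eq_top.1 hrange⟩

lemma weylsTheorem_of_forall_ker_sub_smul_eq_bot {E : Type*} [NormedAddCommGroup E]
    [NormedSpace ℂ E] [CompleteSpace E] {T : E →L[ℂ] E}
    (hT : ∀ lam : ℂ, LinearMap.ker ((T - lam • 1 : E →L[ℂ] E) : E →ₗ[ℂ] E) = ⊥) :
    WeylsTheorem T := by
  have hresolvent : spectrum ℂ T \ weylSpectrum T = ∅ := by
    refine Set.eq_empty_of_forall_notMem fun lam ⟨hspec, hweyl⟩ ↦ hspec ?_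
    rw [spectrum.mem_resolventSet_iff, Algebra.algebraMap_eq_smul_one, ← neg_sub]
    exact ((not_not.1 hweyl).isUnit_of_ker_eq_bot (hT lam)).neg
  have hpi : pi00 T = ∅ := Set.eq_empty_of_forall_notMem fun lam hlam ↦ hlam.2.1 (hT lam)
  exact hresolvent.trans hpi.symm

variable {H : Type*} [NormedAddCommGroup H] [InnerProductSpace ℂ H] [CompleteSpace H]
  [TopologicalSpace.SeparableSpace H]

theorem cesaroHypercyclic_adjoint_weylsTheorem_general
    (T : H →L[ℂ] H) (hT : CesaroHypercyclic T) :
    spectrum ℂ (ContinuousLinearMap.adjoint T) \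
        weylSpectrum (ContinuousLinearMap.adjoint T) =
      pi00 (ContinuousLinearMap.adjoint T) :=
  weylsTheorem_of_forall_ker_sub_smul_eq_bot hT.ker_adjoint_sub_smul_eq_bot

theorem cesaroHypercyclic_adjoint_weylsTheorem
    (hinf : ¬ FiniteDimensional ℂ H) (T : H →L[ℂ] H) (hT : CesaroHypercyclic T) :
    spectrum ℂ (ContinuousLinearMap.adjoint T) \
        weylSpectrum (ContinuousLinearMap.adjoint T) =
      pi00 (ContinuousLinearMap.adjoint T) :=
  cesaroHypercyclic_adjoint_weylsTheorem_general T hT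
end

section
/- Let H be a complex separable infinite-dimensional Hilbert space and T a Cesàro-hypercyclic bounded linear operator on H. Then T satisfies a-Weyl's theorem if and only if π₀₀(T) = ∅. -/
/-
If some `T - μ` had non-dense range, Hahn–Banach would give a functional `φ ≠ 0` with
`φ ∘ T = μ φ`, and `φ` would map the dense Cesàro orbit of `x` into `{μⁿ φ(x) / n}` with
dense image. That set is never dense in `ℂ`: it is bounded if `|μ| ≤ 1` or `φ(x) = 0`, and
otherwise `|μ|ⁿ / n → ∞`. So every `T - μ` has dense range. For such an operator, being bounded
below already makes it invertible, so `σ_a(T) = σ(T)` and `π₀₀ᵃ(T) = π₀₀(T)`; and an upper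
semi-Fredholm `T - μ` of index `≤ 0` is onto, hence has trivial cokernel and kernel, so
`σ_a(T) \ σ_ea(T) = ∅`. a-Weyl's theorem then says exactly `π₀₀(T) = ∅`.
-/

open Filter Topology

open Set

theorem ContinuousLinearMap.exists_ne_zero_comp_eq_zero_of_not_denseRange {𝕜 E F : Type*} [RCLike 𝕜]
    [NormedAddCommGroup E] [NormedSpace 𝕜 E] [TopologicalSpace F] [AddCommGroup F] [Module 𝕜 F]
    (f : F →L[𝕜] E) (hf : ¬ DenseRange f) :
    ∃ φ : StrongDual 𝕜 E, φ ≠ 0 ∧ φ ∘L f = 0 := by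
  let K := (LinearMap.range (f : F →ₗ[𝕜] E)).topologicalClosure
  have hK : (K : Set E) = closure (range f) := by
    simp [K, Submodule.topologicalClosure_coe, LinearMap.coe_range]
  have : IsClosed (K : Set E) := hK ▸ isClosed_closure
  obtain ⟨y, hy⟩ : ∃ y, y ∉ K := by
    simpa [DenseRange, Dense, ← SetLike.mem_coe, hK] using hf
  obtain ⟨g, hg⟩ := SeparatingDual.exists_ne_zero (R := 𝕜) (x := K.mkQ y)
    (by simpa using hy)
  refine ⟨g ∘L K.mkQL, fun h => hg (by simpa using congr($h y)), ?_⟩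
  ext x
  have : f x ∈ K := by rw [← SetLike.mem_coe, hK]; exact subset_closure (mem_range_self x)
  simp [(Submodule.Quotient.mk_eq_zero K).2 this]

theorem tendsto_inv_natCast_mul_pow_atTop {b : ℝ} (hb : 1 < b) :
    Tendsto (fun n : ℕ => (n : ℝ)⁻¹ * b ^ n) atTop atTop := by
  have h0 : Tendsto (fun n : ℕ => (n : ℝ) / b ^ n) atTop (𝓝[>] 0) := by
    refine tendsto_nhdsWithin_iff.2
      ⟨by simpa using tendsto_pow_const_div_const_pow_of_one_lt 1 hb, ?_⟩
    filter_upwards [eventually_gt_atTop 0] with n hn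
    exact div_pos (by exact_mod_cast hn) (pow_pos (zero_lt_one.trans hb) n)
  exact h0.inv_tendsto_nhdsGT_zero.congr fun n => by rw [Pi.inv_apply, inv_div, div_eq_inv_mul]

theorem not_denseRange_of_isBounded_range {ι E : Type*} [NormedAddCommGroup E] [NormedSpace ℝ E]
    [Nontrivial E] {z : ι → E} (hz : Bornology.IsBounded (range z)) : ¬ DenseRange z :=
  fun hd => NormedSpace.unbounded_univ ℝ E (hd.closure_eq ▸ hz.closure)

theorem not_denseRange_of_tendsto_norm_atTop {E : Type*} [NormedAddCommGroup E] [NormedSpace ℝ E]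
    [Nontrivial E] {z : ℕ → E} (hz : Tendsto (‖z ·‖) atTop atTop) : ¬ DenseRange z := by
  intro hd
  obtain ⟨N, hN⟩ := eventually_atTop.1 (hz.eventually_ge_atTop 1)
  -- a dense set stays dense after removing the finitely many points `z n`, `n < N`
  obtain ⟨_, hn, ⟨n, rfl⟩, hnN⟩ :=
    (hd.sdiff_finite ((finite_Iio N).image z)).inter_open_nonempty
      (Metric.ball 0 1) Metric.isOpen_ball ⟨0, Metric.mem_ball_self one_pos⟩
  have hNn : N ≤ n := not_lt.1 fun h => hnN ⟨n, h, rfl⟩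
  linarith [hN n hNn, mem_ball_zero_iff.1 hn]

theorem not_denseRange_inv_mul_pow_mul (μ c : ℂ) :
    ¬ DenseRange fun n : ℕ => (n : ℂ)⁻¹ * (μ ^ n * c) := by
  have hnorm (n : ℕ) : ‖(n : ℂ)⁻¹ * (μ ^ n * c)‖ = (n : ℝ)⁻¹ * ‖μ‖ ^ n * ‖c‖ := by
    simp [mul_assoc]
  by_cases h : 1 < ‖μ‖ ∧ c ≠ 0
  · apply not_denseRange_of_tendsto_norm_atTop
    simp_rw [hnorm]
    exact (tendsto_inv_natCast_mul_pow_atTop h.1).atTop_mul_const (norm_pos_iff.2 h.2)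
  · apply not_denseRange_of_isBounded_range
    refine isBounded_iff_forall_norm_le.2 ⟨‖c‖, ?_⟩
    rintro _ ⟨n, rfl⟩
    rw [hnorm]
    rcases not_and_or.1 h with hμ | hc
    · exact mul_le_of_le_one_left (norm_nonneg c)
        (mul_le_one₀ (Nat.cast_inv_le_one n) (by positivity)
          (pow_le_one₀ (norm_nonneg μ) (not_lt.1 hμ)))
    · simp [not_not.1 hc]

section Operators

variable {E : Type*} [NormedAddCommGroup E] [NormedSpace ℂ E]

theorem CesaroHypercyclic.denseRange_sub_smul_one {T : E →L[ℂ] E} (hT : CesaroHypercyclic T)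
    (μ : ℂ) : DenseRange (T - μ • 1 : E →L[ℂ] E) := by
  by_contra hd
  obtain ⟨φ, hφ0, hφ⟩ := (T - μ • 1).exists_ne_zero_comp_eq_zero_of_not_denseRange hd
  have hφT (y : E) : φ (T y) = μ * φ y := by
    simpa [sub_eq_zero] using congr($hφ y)
  have hφpow (n : ℕ) (y : E) : φ (T^[n] y) = μ ^ n * φ y := by
    induction n with
    | zero => simp
    | succ n ih => rw [Function.iterate_succ_apply', hφT, ih, pow_succ', mul_assoc]
  have hφsurj : Function.Surjective φ :=
    LinearMap.surjective (f := (φ : E →ₗ[ℂ] ℂ)) fun h => hφ0 (ContinuousLinearMap.coe_injective h)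
  obtain ⟨x, hx⟩ := hT
  refine not_denseRange_inv_mul_pow_mul μ (φ x)
    ((hφsurj.denseRange.dense_image φ.continuous hx).mono ?_)
  rintro _ ⟨_, ⟨n, -, rfl⟩, rfl⟩
  exact ⟨n, by simp [hφpow]⟩

theorem isBoundedBelow_of_isUnit {S : E →L[ℂ] E} (hS : IsUnit S) : IsBoundedBelow S := by
  obtain ⟨u, rfl⟩ := hS
  refine ⟨(‖(↑u⁻¹ : E →L[ℂ] E)‖ + 1)⁻¹, by positivity, fun x => ?_⟩
  have hx : ‖x‖ ≤ ‖(↑u⁻¹ : E →L[ℂ] E)‖ * ‖(u : E →L[ℂ] E) x‖ := by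
    calc ‖x‖ = ‖(↑u⁻¹ * ↑u : E →L[ℂ] E) x‖ := by rw [u.inv_mul]; rfl
      _ ≤ _ := (↑u⁻¹ : E →L[ℂ] E).le_opNorm _
  rw [inv_mul_le_iff₀ (by positivity)]
  exact hx.trans (by gcongr; linarith)

theorem IsBoundedBelow.injective {S : E →L[ℂ] E} (hS : IsBoundedBelow S) :
    Function.Injective S := by
  obtain ⟨c, hc, hb⟩ := hS
  exact (injective_iff_map_eq_zero S).2 fun x hx =>
    norm_le_zero_iff.1 (le_of_mul_le_mul_left (by simpa [hx] using hb x) hc)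

theorem mem_spectrum_iff_not_isUnit_sub_smul_one {T : E →L[ℂ] E} {μ : ℂ} :
    μ ∈ spectrum ℂ T ↔ ¬ IsUnit (T - μ • 1) := by
  rw [spectrum.mem_iff, Algebra.algebraMap_eq_smul_one, IsUnit.sub_iff]

variable [CompleteSpace E]

theorem IsBoundedBelow.isClosed_range {S : E →L[ℂ] E} (hS : IsBoundedBelow S) :
    IsClosed (range S) := by
  obtain ⟨c, hc, hb⟩ := hS
  refine (S.antilipschitz_of_bound (K := ⟨c⁻¹, by positivity⟩) fun x => ?_).isClosed_range
    S.uniformContinuous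
  change ‖x‖ ≤ c⁻¹ * ‖S x‖
  rw [inv_mul_eq_div, le_div_iff₀ hc]
  linarith [hb x]

theorem DenseRange.surjective_of_isClosed_range {α β : Type*} [TopologicalSpace β] {f : α → β}
    (hd : DenseRange f) (hc : IsClosed (range f)) : Function.Surjective f :=
  range_eq_univ.1 (hc.closure_eq ▸ hd.closure_range)

theorem isBoundedBelow_iff_isUnit_of_denseRange {S : E →L[ℂ] E} (hd : DenseRange S) :
    IsBoundedBelow S ↔ IsUnit S :=
  ⟨fun h => S.isUnit_iff_bijective.2
    ⟨h.injective, hd.surjective_of_isClosed_range h.isClosed_range⟩, isBoundedBelow_of_isUnit⟩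

theorem isUnit_of_isUpperSemiFredholm_of_denseRange {S : E →L[ℂ] E} (hF : IsUpperSemiFredholm S)
    (hi : IndexLE0 S) (hd : DenseRange S) : IsUnit S := by
  have hsurj : Function.Surjective S :=
    hd.surjective_of_isClosed_range (by simpa [LinearMap.coe_range] using hF.1)
  have hran : LinearMap.range (S : E →ₗ[ℂ] E) = ⊤ := LinearMap.range_eq_top.2 hsurj
  have hker : LinearMap.ker (S : E →ₗ[ℂ] E) = ⊥ := by
    have : Subsingleton (E ⧸ LinearMap.range (S : E →ₗ[ℂ] E)) := by
      rw [hran]; infer_instance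
    rw [IndexLE0, rank_subsingleton' ℂ (E ⧸ _), nonpos_iff_eq_zero, Submodule.rank_eq_zero] at hi
    exact hi
  exact S.isUnit_iff_bijective.2 ⟨LinearMap.ker_eq_bot.1 hker, hsurj⟩

theorem approxSpectrum_eq_spectrum_of_denseRange {T : E →L[ℂ] E}
    (hd : ∀ μ : ℂ, DenseRange (T - μ • 1 : E →L[ℂ] E)) : approxSpectrum T = spectrum ℂ T := by
  ext μ
  rw [mem_spectrum_iff_not_isUnit_sub_smul_one, approxSpectrum, mem_ofPred_eq,
    isBoundedBelow_iff_isUnit_of_denseRange (hd μ)]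

theorem approxSpectrum_diff_essApproxSpectrum_eq_empty_of_denseRange {T : E →L[ℂ] E}
    (hd : ∀ μ : ℂ, DenseRange (T - μ • 1 : E →L[ℂ] E)) :
    approxSpectrum T \ essApproxSpectrum T = ∅ := by
  refine eq_empty_of_forall_notMem fun μ ⟨hμa, hμe⟩ => hμa (isBoundedBelow_of_isUnit ?_)
  rw [essApproxSpectrum, mem_ofPred_eq, not_not] at hμe
  exact isUnit_of_isUpperSemiFredholm_of_denseRange hμe.1 hμe.2 (hd μ)

end Operators

variable {H : Type*} [NormedAddCommGroup H] [InnerProductSpace ℂ H] [CompleteSpace H]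
  [TopologicalSpace.SeparableSpace H]

theorem cesaroHypercyclic_aWeylsTheorem_iff_general
    (T : H →L[ℂ] H) (hT : CesaroHypercyclic T) :
    AWeylsTheorem T ↔ pi00 T = ∅ := by
  have hd := hT.denseRange_sub_smul_one
  have hpi : pi00a T = pi00 T := by
    rw [pi00a, approxSpectrum_eq_spectrum_of_denseRange hd, pi00]
  rw [AWeylsTheorem, approxSpectrum_diff_essApproxSpectrum_eq_empty_of_denseRange hd, hpi, eq_comm]

theorem cesaroHypercyclic_aWeylsTheorem_iff
    (hinf : ¬ FiniteDimensional ℂ H) (T : H →L[ℂ] H) (hT : CesaroHypercyclic T) :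
    AWeylsTheorem T ↔ pi00 T = ∅ :=
  cesaroHypercyclic_aWeylsTheorem_iff_general T hT
end

section
/- Let H be a complex separable infinite-dimensional Hilbert space and T a bounded linear operator on H. Then there exists a vector x ∈ H such that the orbit {M_n(T)x : n ≥ 1} of the arithmetic means is dense in H if and only if there exists a vector y ∈ H such that the set {n⁻¹ Tⁿ y : n ≥ 1} is dense in H, where M_n(T) = (I + T + T² + ⋯ + Tⁿ⁻¹)/n. -/
open Filter Topology

variable {H : Type*} [NormedAddCommGroup H] [InnerProductSpace ℂ H] [CompleteSpace H]
  [TopologicalSpace.SeparableSpace H]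

/-!
Since `(T - 1) Mₙ(T) = Mₙ(T) (T - 1) = (Tⁿ - 1) / n`, applying `T - 1` to the means of `x` gives
`Tⁿx / n - x / n`, and the means of `(T - 1) y` are `Tⁿy / n - y / n`. The terms `x / n`, `y / n`
tend to `0`, and in a space without isolated points such a vanishing perturbation does not
affect density of a sequence. For the forward direction one also needs `T - 1` to have dense
range: every mean of `x` is congruent to `x` modulo the closure `K` of that range, so the dense
orbit lies in the closed set `x + K`, forcing `K` to be the whole space.
-/

section Cesaro

variable {𝕜 E : Type*} [Field 𝕜] [AddCommGroup E] [Module 𝕜 E] [TopologicalSpace E]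
  [IsTopologicalAddGroup E] [ContinuousConstSMul 𝕜 E]

def cesaroMean (T : E →L[𝕜] E) (n : ℕ) : E →L[𝕜] E :=
  (n : 𝕜)⁻¹ • ∑ i ∈ Finset.range n, T ^ i

theorem sub_one_mul_cesaroMean (T : E →L[𝕜] E) (n : ℕ) :
    (T - 1) * cesaroMean T n = (n : 𝕜)⁻¹ • (T ^ n - 1) := by
  rw [cesaroMean, mul_smul_comm, mul_geom_sum]

theorem cesaroMean_mul_sub_one (T : E →L[𝕜] E) (n : ℕ) :
    cesaroMean T n * (T - 1) = (n : 𝕜)⁻¹ • (T ^ n - 1) := by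
  rw [cesaroMean, smul_mul_assoc, geom_sum_mul]

theorem cesaroMean_apply_sub_self_mem_range [CharZero 𝕜] (T : E →L[𝕜] E) {n : ℕ}
    (hn : n ≠ 0) (x : E) : cesaroMean T n x - x ∈ (T - 1).range := by
  have hpow : ∀ i, (T ^ i) x - x ∈ (T - 1).range := fun i =>
    ⟨(∑ j ∈ Finset.range i, T ^ j) x, by simpa using DFunLike.congr_fun (mul_geom_sum T i) x⟩
  have hn' : (n : 𝕜) ≠ 0 := Nat.cast_ne_zero.2 hn
  have hmean : cesaroMean T n x - x = (n : 𝕜)⁻¹ • ∑ i ∈ Finset.range n, ((T ^ i) x - x) := by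
    simp [cesaroMean, Finset.sum_sub_distrib, smul_sub, ← Nat.cast_smul_eq_nsmul 𝕜, smul_smul,
      inv_mul_cancel₀ hn']
  rw [hmean]
  exact Submodule.smul_mem _ _ (Submodule.sum_mem _ fun i _ => hpow i)

theorem denseRange_sub_one_of_dense_cesaroMean [CharZero 𝕜] {T : E →L[𝕜] E} {x : E}
    (hx : Dense ((cesaroMean T · x) '' Set.Ici 1)) : DenseRange (T - 1 : E →L[𝕜] E) := by
  set K := (T - 1 : E →L[𝕜] E).range.topologicalClosure
  have hclosed : IsClosed {y : E | y - x ∈ K} :=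
    (Submodule.isClosed_topologicalClosure _).preimage (continuous_sub_right x)
  have hmeans : (cesaroMean T · x) '' Set.Ici 1 ⊆ {y : E | y - x ∈ K} := by
    rintro _ ⟨n, hn, rfl⟩
    exact Submodule.le_topologicalClosure _
      (cesaroMean_apply_sub_self_mem_range T (Nat.one_le_iff_ne_zero.1 hn) x)
  have hall : ∀ y, y - x ∈ K := fun y => by
    simpa only [hclosed.closure_eq, Set.mem_ofPred_eq] using hx.mono hmeans y
  have hK : K = ⊤ := eq_top_iff.2 fun v _ => by simpa using hall (v + x)
  exact Submodule.dense_iff_topologicalClosure_eq_top.2 hK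

end Cesaro

theorem dense_image_of_tendsto_dist {X : Type*} [MetricSpace X] [∀ x : X, (𝓝[≠] x).NeBot]
    {u w : ℕ → X} {s : Set ℕ} (hu : Dense (u '' s))
    (huw : Tendsto (fun n => dist (u n) (w n)) atTop (𝓝 0)) : Dense (w '' s) := by
  refine Metric.dense_iff.2 fun z r hr => ?_
  obtain ⟨N, hN⟩ := Metric.tendsto_atTop.1 huw (r / 2) (half_pos hr)
  have htail : Dense (u '' (s \ Set.Iio N)) := by
    refine (hu.sdiff_finite ((Set.finite_Iio N).image u)).mono ?_
    rintro _ ⟨⟨n, hn, rfl⟩, hnN⟩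
    exact ⟨n, ⟨hn, fun h => hnN ⟨n, h, rfl⟩⟩, rfl⟩
  obtain ⟨_, hz, n, ⟨hns, hnN⟩, rfl⟩ := Metric.dense_iff.1 htail z (r / 2) (half_pos hr)
  refine ⟨w n, ?_, n, hns, rfl⟩
  have hclose : dist (u n) (w n) < r / 2 := by
    simpa [abs_of_nonneg dist_nonneg] using hN n (not_lt.1 hnN)
  calc dist (w n) z ≤ dist (w n) (u n) + dist (u n) z := dist_triangle _ _ _
    _ < r / 2 + r / 2 := add_lt_add (dist_comm (u n) (w n) ▸ hclose) hz
    _ = r := add_halves r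

theorem tendsto_dist_inv_smul_sub_inv_smul {𝕜 E : Type*} [RCLike 𝕜] [NormedAddCommGroup E]
    [NormedSpace 𝕜 E] (f : ℕ → E) (v : E) :
    Tendsto (fun n : ℕ => dist ((n : 𝕜)⁻¹ • (f n - v)) ((n : 𝕜)⁻¹ • f n)) atTop (𝓝 0) := by
  have hdist : ∀ n : ℕ, dist ((n : 𝕜)⁻¹ • (f n - v)) ((n : 𝕜)⁻¹ • f n) = ‖v‖ * (n : ℝ)⁻¹ := by
    intro n
    rw [dist_eq_norm, ← smul_sub, sub_sub_cancel_left, norm_smul, norm_neg, norm_inv,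
      RCLike.norm_natCast, mul_comm]
  simpa [hdist] using (tendsto_inv_atTop_zero.comp tendsto_natCast_atTop_atTop).const_mul ‖v‖

theorem setOf_exists_one_le_eq_image {α : Type*} (f : ℕ → α) :
    {y | ∃ n, 1 ≤ n ∧ y = f n} = f '' Set.Ici 1 := by
  ext
  simp [eq_comm]

theorem cesaro_mean_orbit_dense_iff_general
    (T : H →L[ℂ] H) :
    (∃ x : H, Dense {y : H | ∃ n : ℕ, 1 ≤ n ∧
        y = (((n : ℂ))⁻¹ • ∑ i ∈ Finset.range n, T ^ i) x}) ↔
      (∃ y : H, Dense {z : H | ∃ n : ℕ, 1 ≤ n ∧ z = ((n : ℂ))⁻¹ • (T ^ n) y}) := by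
  simp only [setOf_exists_one_le_eq_image]
  change (∃ x, Dense ((cesaroMean T · x) '' Set.Ici 1)) ↔ _
  rcases subsingleton_or_nontrivial H with _ | _
  · exact ⟨fun _ => ⟨0, dense_indiscrete (Set.nonempty_Ici.image _)⟩,
      fun _ => ⟨0, dense_indiscrete (Set.nonempty_Ici.image _)⟩⟩
  have := Module.punctured_nhds_neBot ℂ H
  constructor
  · rintro ⟨x, hx⟩
    have hmean : ∀ n, (T - 1) (cesaroMean T n x) = (n : ℂ)⁻¹ • ((T ^ n) x - x) := fun n => by
      simpa using DFunLike.congr_fun (sub_one_mul_cesaroMean T n) x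
    refine ⟨x, dense_image_of_tendsto_dist (u := fun n => (T - 1) (cesaroMean T n x)) ?_ ?_⟩
    · rw [← Set.image_image]
      exact (denseRange_sub_one_of_dense_cesaroMean hx).dense_image (T - 1).continuous hx
    · simpa only [hmean] using tendsto_dist_inv_smul_sub_inv_smul (fun n => (T ^ n) x) x
  · rintro ⟨y, hy⟩
    have hmean : ∀ n, cesaroMean T n ((T - 1) y) = (n : ℂ)⁻¹ • ((T ^ n) y - y) := fun n => by
      simpa using DFunLike.congr_fun (cesaroMean_mul_sub_one T n) y
    refine ⟨(T - 1) y, dense_image_of_tendsto_dist hy ?_⟩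
    simpa only [hmean, dist_comm] using tendsto_dist_inv_smul_sub_inv_smul (fun n => (T ^ n) y) y

theorem cesaro_mean_orbit_dense_iff
    (hinf : ¬ FiniteDimensional ℂ H) (T : H →L[ℂ] H) :
    (∃ x : H, Dense {y : H | ∃ n : ℕ, 1 ≤ n ∧
        y = (((n : ℂ))⁻¹ • ∑ i ∈ Finset.range n, T ^ i) x}) ↔
      (∃ y : H, Dense {z : H | ∃ n : ℕ, 1 ≤ n ∧ z = ((n : ℂ))⁻¹ • (T ^ n) y}) :=
  cesaro_mean_orbit_dense_iff_general T
end
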